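/- arXiv:1801.05550 — 3 statements merged into one kernel-verified Lean document; each statement's English description precedes it below -/
import Mathlib

section
/- For 1 ≤ p ≤ q < ∞, the discrete Morrey space ℓ^p_q(ℤ^d) is complete with respect to the norm ‖x‖_{ℓ^p_q(ℤ^d)} = sup_{m,N} |S_{m,N}|^{1/q−1/p} (Σ_{k ∈ S_{m,N}} |x(k)|^p)^{1/p}. -/
open scoped BigOperators ENNReal

noncomputable section

/-- The discrete cube `S_{m,N} = {k : ‖k - m‖_∞ ≤ N}` in `ℤ^d`. -/
def cubeS (d : ℕ) (m : Fin d → ℤ) (N : ℕ) : Finset (Fin d → ℤ) :=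
  Finset.Icc (fun i => m i - N) (fun i => m i + N)

/-- `R_{m,N}`: the cube `S_{m,N}` with points having some coordinate `m i + N` removed. -/
def cubeR (d : ℕ) (m : Fin d → ℤ) (N : ℕ) : Finset (Fin d → ℤ) :=
  Finset.Ico (fun i => m i - N) (fun i => m i + N)

/-- The sup-norm `‖k‖_∞` of a point of `ℤ^d`, as a natural number. -/
def snorm' (d : ℕ) (k : Fin d → ℤ) : ℕ :=
  Finset.univ.sup fun i => (k i).natAbs

/-- The (centered, odd) discrete Hardy–Littlewood maximal operator. -/
def maxOp (d : ℕ) (x : (Fin d → ℤ) → ℝ) (m : Fin d → ℤ) : ℝ :=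
  ⨆ N : ℕ, (∑ k ∈ cubeS d m N, |x k|) / (2 * N + 1) ^ d

/-- The discrete Morrey norm `‖x‖_{ℓ^p_q(ℤ^d)}`. -/
def morreyNorm (d : ℕ) (p q : ℝ) (x : (Fin d → ℤ) → ℝ) : ℝ :=
  ⨆ mN : (Fin d → ℤ) × ℕ,
    (((2 * mN.2 + 1 : ℝ) ^ d) ^ (1 / q - 1 / p)) *
      (∑ k ∈ cubeS d mN.1 mN.2, |x k| ^ p) ^ (1 / p)

/-- Membership in the discrete Morrey space: the defining supremum is finite. -/
def MemMorrey (d : ℕ) (p q : ℝ) (x : (Fin d → ℤ) → ℝ) : Prop :=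
  BddAbove (Set.range fun mN : (Fin d → ℤ) × ℕ =>
    (((2 * mN.2 + 1 : ℝ) ^ d) ^ (1 / q - 1 / p)) *
      (∑ k ∈ cubeS d mN.1 mN.2, |x k| ^ p) ^ (1 / p))

/-!
A Morrey-Cauchy sequence is Cauchy pointwise, since the cube `S_{k,0} = {k}` already bounds
`|x k|` by the Morrey norm, so it has a pointwise limit `y`. Each term of the supremum defining
the norm involves only finitely many points, hence is continuous under pointwise convergence; so
the uniform bound `‖x n - x n'‖ ≤ ε` passes to the limit `n' → ∞` term by term, giving
`‖x n - y‖ ≤ ε`, and `y = x n - (x n - y)` lies in the space by Minkowski's inequality.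
-/

open Filter Topology

namespace Morrey

variable {d : ℕ} {p q : ℝ}

def morreyTerm (d : ℕ) (p q : ℝ) (x : (Fin d → ℤ) → ℝ) (mN : (Fin d → ℤ) × ℕ) : ℝ :=
  (((2 * mN.2 + 1 : ℝ) ^ d) ^ (1 / q - 1 / p)) *
    (∑ k ∈ cubeS d mN.1 mN.2, |x k| ^ p) ^ (1 / p)

lemma morreyTerm_le_morreyNorm {x : (Fin d → ℤ) → ℝ} (hx : MemMorrey d p q x)
    (mN : (Fin d → ℤ) × ℕ) : morreyTerm d p q x mN ≤ morreyNorm d p q x :=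
  le_ciSup hx mN

lemma morreyNorm_le_of_forall_le {x : (Fin d → ℤ) → ℝ} {C : ℝ} (hC : 0 ≤ C)
    (h : ∀ mN, morreyTerm d p q x mN ≤ C) : morreyNorm d p q x ≤ C :=
  Real.iSup_le h hC

lemma memMorrey_of_forall_le {x : (Fin d → ℤ) → ℝ} {C : ℝ}
    (h : ∀ mN, morreyTerm d p q x mN ≤ C) : MemMorrey d p q x :=
  ⟨C, Set.forall_mem_range.2 h⟩

lemma cubeS_zero (m : Fin d → ℤ) : cubeS d m 0 = {m} := by
  simp [cubeS]

lemma morreyTerm_center_zero (hp : p ≠ 0) (x : (Fin d → ℤ) → ℝ) (k : Fin d → ℤ) :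
    morreyTerm d p q x (k, 0) = |x k| := by
  simp only [morreyTerm, cubeS_zero, Finset.sum_singleton, Nat.cast_zero, mul_zero, zero_add,
    one_pow, Real.one_rpow, one_mul]
  rw [← Real.rpow_mul (abs_nonneg _), mul_one_div_cancel hp, Real.rpow_one]

lemma abs_le_morreyNorm (hp : p ≠ 0) {x : (Fin d → ℤ) → ℝ} (hx : MemMorrey d p q x)
    (k : Fin d → ℤ) : |x k| ≤ morreyNorm d p q x :=
  morreyTerm_center_zero hp x k ▸ morreyTerm_le_morreyNorm hx (k, 0)

lemma morreyTerm_sub_le (hp : 1 ≤ p) (u v : (Fin d → ℤ) → ℝ) (mN : (Fin d → ℤ) × ℕ) :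
    morreyTerm d p q (u - v) mN ≤ morreyTerm d p q u mN + morreyTerm d p q v mN := by
  rw [morreyTerm, morreyTerm, morreyTerm, ← mul_add]
  gcongr
  simpa [sub_eq_add_neg] using Real.Lp_add_le (cubeS d mN.1 mN.2) u (-v) hp

lemma _root_.MemMorrey.sub (hp : 1 ≤ p) {u v : (Fin d → ℤ) → ℝ} (hu : MemMorrey d p q u)
    (hv : MemMorrey d p q v) : MemMorrey d p q (u - v) := by
  obtain ⟨Cu, hCu⟩ := hu
  obtain ⟨Cv, hCv⟩ := hv
  exact memMorrey_of_forall_le fun mN => (morreyTerm_sub_le hp u v mN).trans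
    (add_le_add (hCu (Set.mem_range_self mN)) (hCv (Set.mem_range_self mN)))

lemma tendsto_morreyTerm (hp : 0 ≤ p) {z : ℕ → (Fin d → ℤ) → ℝ} {w : (Fin d → ℤ) → ℝ}
    (hz : ∀ k, Tendsto (fun n => z n k) atTop (𝓝 (w k))) (mN : (Fin d → ℤ) × ℕ) :
    Tendsto (fun n => morreyTerm d p q (z n) mN) atTop (𝓝 (morreyTerm d p q w mN)) := by
  have hsum : Tendsto (fun n => ∑ k ∈ cubeS d mN.1 mN.2, |z n k| ^ p) atTop
      (𝓝 (∑ k ∈ cubeS d mN.1 mN.2, |w k| ^ p)) :=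
    tendsto_finsetSum _ fun k _ => (hz k).abs.rpow_const (Or.inr hp)
  exact (hsum.rpow_const (Or.inr (by positivity))).const_mul _

lemma morreyTerm_le_of_tendsto (hp : 0 ≤ p) {z : ℕ → (Fin d → ℤ) → ℝ}
    {w : (Fin d → ℤ) → ℝ} (hz : ∀ k, Tendsto (fun n => z n k) atTop (𝓝 (w k))) {C : ℝ}
    (hC : ∀ᶠ n in atTop, MemMorrey d p q (z n) ∧ morreyNorm d p q (z n) ≤ C)
    (mN : (Fin d → ℤ) × ℕ) : morreyTerm d p q w mN ≤ C :=
  le_of_tendsto (tendsto_morreyTerm hp hz mN) <|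
    hC.mono fun _ hn => (morreyTerm_le_morreyNorm hn.1 mN).trans hn.2

lemma exists_tendsto_apply_of_cauchy (hp : p ≠ 0) {x : ℕ → (Fin d → ℤ) → ℝ}
    (hx : ∀ n₁ n₂, MemMorrey d p q (x n₁ - x n₂))
    (hcau : ∀ ε : ℝ, 0 < ε → ∃ M : ℕ, ∀ n₁ n₂ : ℕ, M ≤ n₁ → M ≤ n₂ →
      morreyNorm d p q (x n₁ - x n₂) < ε) :
    ∃ y : (Fin d → ℤ) → ℝ, ∀ k, Tendsto (fun n => x n k) atTop (𝓝 (y k)) := by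
  have hcauchy (k : Fin d → ℤ) : CauchySeq fun n => x n k := by
    refine Metric.cauchySeq_iff.2 fun ε hε => ?_
    obtain ⟨M, hM⟩ := hcau ε hε
    exact ⟨M, fun n₁ hn₁ n₂ hn₂ =>
      (abs_le_morreyNorm hp (hx n₁ n₂) k).trans_lt (hM n₁ n₂ hn₁ hn₂)⟩
  choose y hy using fun k => cauchySeq_tendsto_of_complete (hcauchy k)
  exact ⟨y, hy⟩

end Morrey

open Morrey

theorem morrey_complete_general (d : ℕ) (p q : ℝ) (hp : 1 ≤ p)
    (x : ℕ → (Fin d → ℤ) → ℝ) (hx : ∀ n, MemMorrey d p q (x n))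
    (hcau : ∀ ε : ℝ, 0 < ε → ∃ M : ℕ, ∀ n₁ n₂ : ℕ, M ≤ n₁ → M ≤ n₂ →
      morreyNorm d p q (x n₁ - x n₂) < ε) :
    ∃ y : (Fin d → ℤ) → ℝ, MemMorrey d p q y ∧
      ∀ ε : ℝ, 0 < ε → ∃ M : ℕ, ∀ n : ℕ, M ≤ n → morreyNorm d p q (x n - y) < ε := by
  have hsub (n₁ n₂ : ℕ) : MemMorrey d p q (x n₁ - x n₂) := (hx n₁).sub hp (hx n₂)
  obtain ⟨y, hy⟩ := exists_tendsto_apply_of_cauchy (by positivity) hsub hcau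
  have hbound : ∀ ε : ℝ, 0 < ε → ∃ M : ℕ, ∀ n, M ≤ n →
      ∀ mN, morreyTerm d p q (x n - y) mN ≤ ε := by
    intro ε hε
    obtain ⟨M, hM⟩ := hcau ε hε
    refine ⟨M, fun n hn => morreyTerm_le_of_tendsto (by positivity)
      (fun k => tendsto_const_nhds.sub (hy k)) ?_⟩
    filter_upwards [eventually_ge_atTop M] with n₂ hn₂
    exact ⟨hsub n n₂, (hM n n₂ hn hn₂).le⟩
  refine ⟨y, ?_, ?_⟩
  · obtain ⟨M, hM⟩ := hbound 1 one_pos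
    simpa using (hx M).sub hp (memMorrey_of_forall_le (hM M le_rfl))
  · intro ε hε
    obtain ⟨M, hM⟩ := hbound (ε / 2) (half_pos hε)
    exact ⟨M, fun n hn => (morreyNorm_le_of_forall_le (half_pos hε).le (hM n hn)).trans_lt
      (half_lt_self hε)⟩

/-- the discrete Morrey space is complete. -/
theorem morrey_complete (d : ℕ) (p q : ℝ) (hp : 1 ≤ p) (hpq : p ≤ q)
    (x : ℕ → (Fin d → ℤ) → ℝ) (hx : ∀ n, MemMorrey d p q (x n))
    (hcau : ∀ ε : ℝ, 0 < ε → ∃ M : ℕ, ∀ n₁ n₂ : ℕ, M ≤ n₁ → M ≤ n₂ →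
      morreyNorm d p q (x n₁ - x n₂) < ε) :
    ∃ y : (Fin d → ℤ) → ℝ, MemMorrey d p q y ∧
      ∀ ε : ℝ, 0 < ε → ∃ M : ℕ, ∀ n : ℕ, M ≤ n → morreyNorm d p q (x n - y) < ε :=
  morrey_complete_general d p q hp x hx hcau
end
end

section
/- Let 1 < p < ∞. There exists K > 0 (depending only on p and d) such that for all x : ℤ^d → ℝ and every nonnegative φ : ℤ^d → ℝ, Σ_{k ∈ ℤ^d} (Mx(k))^p φ(k) ≤ K Σ_{k ∈ ℤ^d} |x(k)|^p Mφ(k). (Discrete Fefferman–Stein inequality.) -/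
open scoped BigOperators ENNReal

noncomputable section

/-- The (centered) discrete maximal operator, valued in `[0,∞]`. -/
def maxOpE (d : ℕ) (x : (Fin d → ℤ) → ℝ) (m : Fin d → ℤ) : ℝ≥0∞ :=
  ⨆ N : ℕ, (∑ k ∈ cubeS d m N, ENNReal.ofReal |x k|) / ((2 * N + 1 : ℕ) : ℝ≥0∞) ^ d

/-- The uncentered discrete maximal operator, valued in `[0,∞]`:
the supremum over all cubes `S_{k,N}` containing `m`. -/
def umaxOpE (d : ℕ) (x : (Fin d → ℤ) → ℝ) (m : Fin d → ℤ) : ℝ≥0∞ :=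
  ⨆ s : {kN : (Fin d → ℤ) × ℕ // m ∈ cubeS d kN.1 kN.2},
    (∑ i ∈ cubeS d s.1.1 s.1.2, ENNReal.ofReal |x i|) / ((2 * s.1.2 + 1 : ℕ) : ℝ≥0∞) ^ d

/-- The "even" discrete maximal operator, valued in `[0,∞]`:
the supremum over `N ≥ 1` of averages over `R_{m,N}`. -/
def emaxOpE (d : ℕ) (x : (Fin d → ℤ) → ℝ) (m : Fin d → ℤ) : ℝ≥0∞ :=
  ⨆ N : ℕ, (∑ k ∈ cubeR d m (N + 1), ENNReal.ofReal |x k|) / ((2 * (N + 1) : ℕ) : ℝ≥0∞) ^ d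

/-! The weighted weak-type bound `t · w{Mg > t} ≤ 5^d ∑ g · Mw` comes from a Vitali selection
among the cubes on which the average of `g` exceeds `t`: for a selected cube `S(b,N)` and any `k`
in it, `S(b,4N) ⊆ S(k,5N)`, so the `w`-mass of the enlarged cube is at most `|S(k,5N)| · Mw(k)`,
and it can be charged to `g · Mw` on `S(b,N)` itself. Since `Mg ≤ M(g 1_{g>t}) + t`, the set
`{Mg > 2t}` lies in `{M(g 1_{g>t}) > t}`. Summing the weak-type bound for `g 1_{g>2^n}` over the
dyadic levels `2^n`, weighted by `2^{np}`, and exchanging the sums leaves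
`∑_{2^n < g(k)} 2^{n(p-1)} ≲ g(k)^{p-1}`. -/

namespace ENNReal

theorem tsum_mul_tsum_ite_comm {α β : Type*} (P : α → β → Prop)
    [∀ x y, Decidable (P x y)] (a : α → ℝ≥0∞) (b : β → ℝ≥0∞) :
    ∑' y, (∑' x, if P x y then a x else 0) * b y = ∑' x, a x * ∑' y, if P x y then b y else 0 := by
  simp_rw [← ENNReal.tsum_mul_right, ← ENNReal.tsum_mul_left, ite_mul, mul_ite, zero_mul, mul_zero]
  exact ENNReal.tsum_comm

theorem rpow_sub_one_mul {p : ℝ} (hp : 1 ≤ p) (x : ℝ≥0∞) : x ^ (p - 1) * x = x ^ p := by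
  calc x ^ (p - 1) * x = x ^ (p - 1) * x ^ (1 : ℝ) := by rw [ENNReal.rpow_one]
    _ = x ^ p := by
      rw [← ENNReal.rpow_add_of_nonneg _ _ (sub_nonneg.2 hp) zero_le_one, sub_add_cancel]

theorem tsum_ite_le_zpow_eq {r : ℝ≥0∞} (hr0 : r ≠ 0) (hr' : r ≠ ⊤) (n₀ : ℤ) :
    ∑' n : ℤ, (if n ≤ n₀ then r ^ n else 0) = r ^ n₀ * (1 - r⁻¹)⁻¹ := by
  have hsupp : Function.support (fun n : ℤ => if n ≤ n₀ then r ^ n else 0) ⊆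
      Set.range fun j : ℕ => n₀ - j := fun n hn => by
    have : n ≤ n₀ := by by_contra h; exact hn (if_neg h)
    exact ⟨(n₀ - n).toNat, show n₀ - ((n₀ - n).toNat : ℤ) = n by omega⟩
  have hinj : Function.Injective fun j : ℕ => n₀ - j := fun i j h => by simpa using h
  rw [← hinj.tsum_eq hsupp, ← ENNReal.tsum_geometric, ← ENNReal.tsum_mul_left]
  refine tsum_congr fun j => ?_
  rw [if_pos (by omega), ENNReal.zpow_sub hr0 hr', zpow_natCast, ENNReal.inv_pow]

theorem rpow_le_mul_tsum_zpow {q : ℝ} (hq : 0 < q) (f : ℝ≥0∞) :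
    f ^ q ≤ 4 ^ q * ∑' n : ℤ, if 2 * 2 ^ n < f then ((2 : ℝ≥0∞) ^ n) ^ q else 0 := by
  rcases eq_or_ne f 0 with rfl | h0
  · simp [zero_rpow_of_pos hq]
  rcases eq_or_ne f ⊤ with rfl | htop
  · suffices ∑' n : ℤ, (if (2 : ℝ≥0∞) * 2 ^ n < ⊤ then ((2 : ℝ≥0∞) ^ n) ^ q else 0) = ⊤ by
      rw [top_rpow_of_pos hq, this, mul_top (rpow_pos (by norm_num) ofNat_ne_top).ne']
    refine top_le_iff.1 ?_
    calc ⊤ = ∑' _ : ℕ, (1 : ℝ≥0∞) := (tsum_const_eq_top_of_ne_zero one_ne_zero).symm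
      _ ≤ ∑' k : ℕ, if (2 : ℝ≥0∞) * 2 ^ (k : ℤ) < ⊤ then ((2 : ℝ≥0∞) ^ (k : ℤ)) ^ q else 0 :=
          ENNReal.tsum_le_tsum fun k => by
            rw [if_pos (mul_lt_top ofNat_lt_top (zpow_lt_top two_ne_zero ofNat_ne_top _)),
              zpow_natCast]
            exact one_le_rpow (one_le_pow₀ one_le_two) hq
      _ ≤ _ := tsum_comp_le_tsum_of_injective Nat.cast_injective _
  obtain ⟨n, hlo, hhi⟩ := exists_mem_Ioc_zpow h0 htop one_lt_two ofNat_ne_top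
  have h4 : (2 : ℝ≥0∞) ^ (n + 1) = 4 * 2 ^ (n - 1) := by
    rw [show n + 1 = 2 + (n - 1) by ring, ENNReal.zpow_add two_ne_zero ofNat_ne_top]
    norm_num
  have h2 : 2 * (2 : ℝ≥0∞) ^ (n - 1) = 2 ^ n := by
    calc (2 : ℝ≥0∞) * 2 ^ (n - 1) = 2 ^ (1 : ℤ) * 2 ^ (n - 1) := by rw [zpow_one]
      _ = 2 ^ n := by rw [← ENNReal.zpow_add two_ne_zero ofNat_ne_top]; ring_nf
  calc f ^ q ≤ ((2 : ℝ≥0∞) ^ (n + 1)) ^ q := rpow_le_rpow hhi hq.le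
    _ = 4 ^ q * ((2 : ℝ≥0∞) ^ (n - 1)) ^ q := by rw [h4, mul_rpow_of_nonneg _ _ hq.le]
    _ ≤ _ := by
        gcongr
        refine le_of_eq_of_le ?_ (ENNReal.le_tsum (n - 1))
        rw [if_pos (h2 ▸ hlo)]

theorem tsum_ite_zpow_lt_rpow_le {q : ℝ} (hq : 0 < q) (c : ℝ≥0∞) :
    ∑' n : ℤ, (if 2 ^ n < c then ((2 : ℝ≥0∞) ^ n) ^ q else 0) ≤
      (1 - ((2 : ℝ≥0∞) ^ q)⁻¹)⁻¹ * c ^ q := by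
  rcases eq_or_ne c 0 with rfl | h0
  · simp
  rcases eq_or_ne c ⊤ with rfl | htop
  · rw [top_rpow_of_pos hq, mul_top (ENNReal.inv_ne_zero.2 (sub_ne_top one_ne_top))]
    exact le_top
  obtain ⟨n₀, hlo, hhi⟩ := exists_mem_Ioc_zpow h0 htop one_lt_two ofNat_ne_top
  have hr0 : (2 : ℝ≥0∞) ^ q ≠ 0 := (rpow_pos two_pos ofNat_ne_top).ne'
  have hr' : (2 : ℝ≥0∞) ^ q ≠ ⊤ := rpow_ne_top_of_nonneg hq.le ofNat_ne_top
  calc ∑' n : ℤ, (if 2 ^ n < c then ((2 : ℝ≥0∞) ^ n) ^ q else 0)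
      ≤ ∑' n : ℤ, (if n ≤ n₀ then ((2 : ℝ≥0∞) ^ q) ^ n else 0) :=
        ENNReal.tsum_le_tsum fun n => by
          split_ifs with hn hle
          · rw [← rpow_intCast_mul, ← rpow_mul_intCast, mul_comm]
          · exact absurd (hn.trans_le hhi) (not_lt.2 (zpow_le_of_le one_le_two (by omega)))
          · exact zero_le
          · exact le_rfl
    _ = ((2 : ℝ≥0∞) ^ q) ^ n₀ * (1 - ((2 : ℝ≥0∞) ^ q)⁻¹)⁻¹ := tsum_ite_le_zpow_eq hr0 hr' n₀
    _ ≤ (1 - ((2 : ℝ≥0∞) ^ q)⁻¹)⁻¹ * c ^ q := by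
        rw [← rpow_mul_intCast, mul_comm q, rpow_intCast_mul, mul_comm]
        gcongr

end ENNReal

theorem Finset.sum_le_sum_sum_of_forall_exists_mem {ι α M : Type*} [AddCommMonoid M]
    [PartialOrder M] [IsOrderedAddMonoid M] [CanonicallyOrderedAdd M] {s : Finset α}
    {U : Finset ι} {t : ι → Finset α} (h : ∀ a ∈ s, ∃ i ∈ U, a ∈ t i) (f : α → M) :
    ∑ a ∈ s, f a ≤ ∑ i ∈ U, ∑ a ∈ t i, f a := by
  classical
  calc ∑ a ∈ s, f a ≤ ∑ a ∈ s, ∑ i ∈ U, if a ∈ t i then f a else 0 :=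
        Finset.sum_le_sum fun a ha => by
          obtain ⟨i, hi, hai⟩ := h a ha
          exact (if_pos hai).symm.le.trans
            (Finset.single_le_sum (f := fun i => if a ∈ t i then f a else 0)
              (fun _ _ => zero_le) hi)
    _ = ∑ i ∈ U, ∑ a ∈ s with a ∈ t i, f a := by
        rw [Finset.sum_comm]; simp_rw [Finset.sum_filter]
    _ ≤ ∑ i ∈ U, ∑ a ∈ t i, f a :=
        Finset.sum_le_sum fun i _ =>
          Finset.sum_le_sum_of_subset fun a ha => (Finset.mem_filter.1 ha).2

section

variable {d : ℕ}

theorem mem_cubeS {m k : Fin d → ℤ} {N : ℕ} :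
    k ∈ cubeS d m N ↔ ∀ i, m i - N ≤ k i ∧ k i ≤ m i + N := by
  simp only [cubeS, Finset.mem_Icc, Pi.le_def, forall_and]

theorem self_mem_cubeS (m : Fin d → ℤ) (N : ℕ) : m ∈ cubeS d m N :=
  mem_cubeS.2 fun _ => by omega

theorem card_cubeS (m : Fin d → ℤ) (N : ℕ) : (cubeS d m N).card = (2 * N + 1) ^ d := by
  have : ∀ i : Fin d, (Finset.Icc (m i - N) (m i + N)).card = 2 * N + 1 := fun i => by
    rw [Int.card_Icc]; omega
  simp [cubeS, Pi.card_Icc, this]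

theorem coe_cubeS (m : Fin d → ℤ) (N : ℕ) :
    (cubeS d m N : Set (Fin d → ℤ)) = Metric.closedBall m N := by
  ext k
  simp only [Finset.mem_coe, mem_cubeS, Metric.mem_closedBall, dist_pi_le_iff (Nat.cast_nonneg N),
    Int.dist_eq']
  refine forall_congr' fun i => ?_
  have h : ((|k i - m i| : ℤ) : ℝ) ≤ N ↔ |k i - m i| ≤ N := by norm_cast
  rw [h, abs_le]
  omega

theorem cubeS_subset_cubeS_of_mem {b k : Fin d → ℤ} {N : ℕ} (hk : k ∈ cubeS d b N)
    (R : ℕ) : cubeS d b R ⊆ cubeS d k (R + N) := by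
  intro j hj
  rw [mem_cubeS] at *
  intro i
  have := hk i; have := hj i
  push_cast
  omega

def maximalFn (g : (Fin d → ℤ) → ℝ≥0∞) (m : Fin d → ℤ) : ℝ≥0∞ :=
  ⨆ N : ℕ, (∑ k ∈ cubeS d m N, g k) / ((2 * N + 1 : ℕ) : ℝ≥0∞) ^ d

theorem maxOpE_eq_maximalFn (x : (Fin d → ℤ) → ℝ) :
    maxOpE d x = maximalFn fun k => ENNReal.ofReal |x k| := rfl

theorem cubeVol_ne_zero (N : ℕ) : ((2 * N + 1 : ℕ) : ℝ≥0∞) ^ d ≠ 0 := by simp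

theorem cubeVol_ne_top (N : ℕ) : ((2 * N + 1 : ℕ) : ℝ≥0∞) ^ d ≠ ⊤ :=
  ENNReal.pow_ne_top (ENNReal.natCast_ne_top _)

theorem sum_cubeS_le_mul_maximalFn (g : (Fin d → ℤ) → ℝ≥0∞) (m : Fin d → ℤ) (N : ℕ) :
    ∑ k ∈ cubeS d m N, g k ≤ ((2 * N + 1 : ℕ) : ℝ≥0∞) ^ d * maximalFn g m := by
  rw [mul_comm, ← ENNReal.div_le_iff (cubeVol_ne_zero N) (cubeVol_ne_top N)]
  exact le_iSup (fun N => (∑ k ∈ cubeS d m N, g k) / ((2 * N + 1 : ℕ) : ℝ≥0∞) ^ d) N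

theorem maximalFn_le_maximalFn_indicator_add (g : (Fin d → ℤ) → ℝ≥0∞) (t : ℝ≥0∞)
    (m : Fin d → ℤ) :
    maximalFn g m ≤ maximalFn ({k | t < g k}.indicator g) m + t := by
  refine iSup_le fun N => ?_
  set V : ℝ≥0∞ := ((2 * N + 1 : ℕ) : ℝ≥0∞) ^ d
  have hg : ∀ k, g k ≤ {k | t < g k}.indicator g k + t := fun k => by
    by_cases hk : t < g k
    · simp [hk]
    · simpa [hk] using not_lt.1 hk
  calc (∑ k ∈ cubeS d m N, g k) / V
      ≤ (∑ k ∈ cubeS d m N, {k | t < g k}.indicator g k + t * V) / V := by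
        gcongr
        refine (Finset.sum_le_sum fun k _ => hg k).trans_eq ?_
        rw [Finset.sum_add_distrib, Finset.sum_const, card_cubeS, nsmul_eq_mul, mul_comm]
        push_cast [V]
        rfl
    _ = (∑ k ∈ cubeS d m N, {k | t < g k}.indicator g k) / V + t := by
        rw [ENNReal.add_div, ENNReal.mul_div_cancel_right (cubeVol_ne_zero N) (cubeVol_ne_top N)]
    _ ≤ maximalFn ({k | t < g k}.indicator g) m + t := by
        gcongr
        exact le_iSup (fun N => (∑ k ∈ cubeS d m N, {k | t < g k}.indicator g k) /
          ((2 * N + 1 : ℕ) : ℝ≥0∞) ^ d) N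

theorem lt_maximalFn_indicator_of_two_mul_lt {g : (Fin d → ℤ) → ℝ≥0∞} {t : ℝ≥0∞}
    {m : Fin d → ℤ} (h : 2 * t < maximalFn g m) :
    t < maximalFn ({k | t < g k}.indicator g) m := by
  by_contra! hle
  have := (maximalFn_le_maximalFn_indicator_add g t m).trans (add_le_add_left hle t)
  rw [← two_mul] at this
  exact this.not_gt h

theorem exists_pairwiseDisjoint_cubeS_subset_four_mul (F : Finset (Fin d → ℤ))
    (N : (Fin d → ℤ) → ℕ) :
    ∃ U ⊆ F, (U : Set (Fin d → ℤ)).PairwiseDisjoint (fun b => cubeS d b (N b)) ∧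
      ∀ m ∈ F, ∃ b ∈ U, cubeS d m (N m) ⊆ cubeS d b (4 * N b) := by
  classical
  obtain ⟨u, huF, hdisj, hcover⟩ := Vitali.exists_disjoint_subfamily_covering_enlargement_closedBall
    (F : Set (Fin d → ℤ)) id (fun m => (N m : ℝ)) ((F.sup N : ℕ) : ℝ) (fun m hm => by
      exact_mod_cast Finset.le_sup (f := N) hm) 4 (by norm_num)
  have hu : u.Finite := F.finite_toSet.subset huF
  refine ⟨hu.toFinset, by simpa using huF, ?_, fun m hm => ?_⟩
  · intro a ha b hb hab
    rw [Function.onFun, ← Finset.disjoint_coe, coe_cubeS, coe_cubeS]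
    exact hdisj (by simpa using ha) (by simpa using hb) hab
  · obtain ⟨b, hb, hsub⟩ := hcover m hm
    refine ⟨b, hu.mem_toFinset.2 hb, ?_⟩
    rw [← Finset.coe_subset, coe_cubeS, coe_cubeS]
    simpa using hsub

theorem mul_sum_cubeS_four_mul_le {g w : (Fin d → ℤ) → ℝ≥0∞} {t : ℝ≥0∞} {b : Fin d → ℤ}
    {N : ℕ} (ht : t * ((2 * N + 1 : ℕ) : ℝ≥0∞) ^ d ≤ ∑ k ∈ cubeS d b N, g k) :
    t * ∑ k ∈ cubeS d b (4 * N), w k ≤ 5 ^ d * ∑ k ∈ cubeS d b N, g k * maximalFn w k := by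
  set V : ℝ≥0∞ := ((2 * N + 1 : ℕ) : ℝ≥0∞) ^ d
  have hlocal : ∀ k ∈ cubeS d b N, ∑ j ∈ cubeS d b (4 * N), w j ≤ 5 ^ d * V * maximalFn w k := by
    intro k hk
    calc ∑ j ∈ cubeS d b (4 * N), w j ≤ ∑ j ∈ cubeS d k (4 * N + N), w j :=
          Finset.sum_le_sum_of_subset (cubeS_subset_cubeS_of_mem hk _)
      _ ≤ ((2 * (4 * N + N) + 1 : ℕ) : ℝ≥0∞) ^ d * maximalFn w k :=
          sum_cubeS_le_mul_maximalFn w k _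
      _ ≤ 5 ^ d * V * maximalFn w k := by
          rw [← mul_pow]
          gcongr
          exact_mod_cast (by omega : 2 * (4 * N + N) + 1 ≤ 5 * (2 * N + 1))
  rw [← ENNReal.mul_le_mul_iff_right (cubeVol_ne_zero N) (cubeVol_ne_top N)]
  calc V * (t * ∑ k ∈ cubeS d b (4 * N), w k) = t * V * ∑ k ∈ cubeS d b (4 * N), w k := by ring
    _ ≤ ∑ k ∈ cubeS d b N, g k * ∑ j ∈ cubeS d b (4 * N), w j := by
        rw [← Finset.sum_mul]; gcongr
    _ ≤ ∑ k ∈ cubeS d b N, g k * (5 ^ d * V * maximalFn w k) :=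
        Finset.sum_le_sum fun k hk => by gcongr; exact hlocal k hk
    _ = V * (5 ^ d * ∑ k ∈ cubeS d b N, g k * maximalFn w k) := by
        rw [Finset.mul_sum, Finset.mul_sum]
        exact Finset.sum_congr rfl fun k _ => by ring

theorem mul_tsum_indicator_lt_maximalFn_le (g w : (Fin d → ℤ) → ℝ≥0∞) (t : ℝ≥0∞) :
    t * ∑' m, {m | t < maximalFn g m}.indicator w m ≤
      5 ^ d * ∑' k, g k * maximalFn w k := by
  classical
  rw [ENNReal.tsum_eq_iSup_sum, ENNReal.mul_iSup]
  refine iSup_le fun F => ?_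
  set F' := F.filter fun m => t < maximalFn g m
  have hN : ∀ m, ∃ N : ℕ, m ∈ F' →
      t * ((2 * N + 1 : ℕ) : ℝ≥0∞) ^ d ≤ ∑ k ∈ cubeS d m N, g k := by
    intro m
    by_cases hm : m ∈ F'
    · obtain ⟨N, hN⟩ := lt_iSup_iff.1 (Finset.mem_filter.1 hm).2
      exact ⟨N, fun _ => ((ENNReal.lt_div_iff_mul_lt (Or.inl (cubeVol_ne_zero N))
        (Or.inl (cubeVol_ne_top N))).1 hN).le⟩
    · exact ⟨0, fun h => absurd h hm⟩
  choose N hN using hN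
  obtain ⟨U, hUF, hdisj, hcover⟩ := exists_pairwiseDisjoint_cubeS_subset_four_mul F' N
  calc t * ∑ m ∈ F, {m | t < maximalFn g m}.indicator w m = t * ∑ m ∈ F', w m := by
        simp only [F', Finset.sum_filter, Set.indicator_apply, Set.mem_ofPred_eq]
    _ ≤ t * ∑ b ∈ U, ∑ k ∈ cubeS d b (4 * N b), w k := by
        gcongr
        refine Finset.sum_le_sum_sum_of_forall_exists_mem (fun m hm => ?_) w
        obtain ⟨b, hb, hsub⟩ := hcover m hm
        exact ⟨b, hb, hsub (self_mem_cubeS m (N m))⟩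
    _ ≤ ∑ b ∈ U, 5 ^ d * ∑ k ∈ cubeS d b (N b), g k * maximalFn w k := by
        rw [Finset.mul_sum]
        exact Finset.sum_le_sum fun b hb => mul_sum_cubeS_four_mul_le (hN b (hUF hb))
    _ = 5 ^ d * ∑ k ∈ U.biUnion fun b => cubeS d b (N b), g k * maximalFn w k := by
        rw [Finset.sum_biUnion hdisj, Finset.mul_sum]
    _ ≤ 5 ^ d * ∑' k, g k * maximalFn w k := by
        gcongr
        exact ENNReal.sum_le_tsum _

variable {p : ℝ}

theorem zpow_rpow_mul_tsum_two_mul_lt_maximalFn_le (hp : 1 ≤ p) (g w : (Fin d → ℤ) → ℝ≥0∞)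
    (n : ℤ) :
    ((2 : ℝ≥0∞) ^ n) ^ p * ∑' m, (if 2 * 2 ^ n < maximalFn g m then w m else 0) ≤
      5 ^ d * (((2 : ℝ≥0∞) ^ n) ^ (p - 1) *
        ∑' k, if 2 ^ n < g k then g k * maximalFn w k else 0) := by
  set t : ℝ≥0∞ := 2 ^ n
  have hweak : t * ∑' m, (if 2 * t < maximalFn g m then w m else 0) ≤
      5 ^ d * ∑' k, if t < g k then g k * maximalFn w k else 0 := by
    calc t * ∑' m, (if 2 * t < maximalFn g m then w m else 0)
        ≤ t * ∑' m, {m | t < maximalFn ({k | t < g k}.indicator g) m}.indicator w m := by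
          gcongr with m
          by_cases hm : 2 * t < maximalFn g m
          · rw [if_pos hm, Set.indicator_of_mem
              (s := {m | t < maximalFn ({k | t < g k}.indicator g) m})
              (lt_maximalFn_indicator_of_two_mul_lt hm)]
          · rw [if_neg hm]
            exact zero_le
      _ ≤ 5 ^ d * ∑' k, {k | t < g k}.indicator g k * maximalFn w k :=
          mul_tsum_indicator_lt_maximalFn_le _ w t
      _ = 5 ^ d * ∑' k, if t < g k then g k * maximalFn w k else 0 := by
          simp only [Set.indicator_apply, Set.mem_ofPred_eq, ite_mul, zero_mul]
  calc t ^ p * ∑' m, (if 2 * t < maximalFn g m then w m else 0)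
      = t ^ (p - 1) * (t * ∑' m, if 2 * t < maximalFn g m then w m else 0) := by
        rw [← mul_assoc, ENNReal.rpow_sub_one_mul hp]
    _ ≤ t ^ (p - 1) * (5 ^ d * ∑' k, if t < g k then g k * maximalFn w k else 0) := by
        gcongr
    _ = _ := by ring

theorem tsum_maximalFn_rpow_mul_le (hp : 1 < p) (g w : (Fin d → ℤ) → ℝ≥0∞) :
    ∑' m, maximalFn g m ^ p * w m ≤
      4 ^ p * 5 ^ d * (1 - ((2 : ℝ≥0∞) ^ (p - 1))⁻¹)⁻¹ * ∑' k, g k ^ p * maximalFn w k := by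
  have hp0 : 0 < p := zero_lt_one.trans hp
  have hp1 : 0 < p - 1 := sub_pos.2 hp
  set C : ℝ≥0∞ := (1 - ((2 : ℝ≥0∞) ^ (p - 1))⁻¹)⁻¹
  calc ∑' m, maximalFn g m ^ p * w m
      ≤ ∑' m, (4 ^ p * ∑' n : ℤ,
          if 2 * 2 ^ n < maximalFn g m then ((2 : ℝ≥0∞) ^ n) ^ p else 0) * w m := by
        gcongr with m
        exact ENNReal.rpow_le_mul_tsum_zpow hp0 _
    _ = 4 ^ p * ∑' n : ℤ, ((2 : ℝ≥0∞) ^ n) ^ p *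
          ∑' m, (if 2 * 2 ^ n < maximalFn g m then w m else 0) := by
        simp_rw [mul_assoc, ENNReal.tsum_mul_left, ENNReal.tsum_mul_tsum_ite_comm]
    _ ≤ 4 ^ p * ∑' n : ℤ, 5 ^ d * (((2 : ℝ≥0∞) ^ n) ^ (p - 1) *
          ∑' k, if 2 ^ n < g k then g k * maximalFn w k else 0) := by
        gcongr 4 ^ p * ?_
        exact ENNReal.tsum_le_tsum (zpow_rpow_mul_tsum_two_mul_lt_maximalFn_le hp.le g w)
    _ = 4 ^ p * 5 ^ d * ∑' k, (∑' n : ℤ,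
          if 2 ^ n < g k then ((2 : ℝ≥0∞) ^ n) ^ (p - 1) else 0) * (g k * maximalFn w k) := by
        rw [ENNReal.tsum_mul_left, ENNReal.tsum_mul_tsum_ite_comm, mul_assoc]
    _ ≤ 4 ^ p * 5 ^ d * ∑' k, (C * g k ^ (p - 1)) * (g k * maximalFn w k) := by
        gcongr with k
        exact ENNReal.tsum_ite_zpow_lt_rpow_le hp1 _
    _ = 4 ^ p * 5 ^ d * C * ∑' k, g k ^ p * maximalFn w k := by
        rw [mul_assoc (4 ^ p * 5 ^ d) C, ← ENNReal.tsum_mul_left (a := C)]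
        congr 1
        refine tsum_congr fun k => ?_
        rw [← ENNReal.rpow_sub_one_mul hp.le]
        ring

end

/-- discrete Fefferman–Stein inequality for the centered maximal operator. -/
theorem discrete_fefferman_stein (d : ℕ) (p : ℝ) (hp : 1 < p) :
    ∃ K : ℝ, 0 < K ∧ ∀ (x φ : (Fin d → ℤ) → ℝ), (∀ k, 0 ≤ φ k) →
      ∑' k : Fin d → ℤ, (maxOpE d x k) ^ p * ENNReal.ofReal (φ k) ≤
        ENNReal.ofReal K * ∑' k : Fin d → ℤ, ENNReal.ofReal (|x k| ^ p) * maxOpE d φ k := by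
  set C : ℝ≥0∞ := 4 ^ p * 5 ^ d * (1 - ((2 : ℝ≥0∞) ^ (p - 1))⁻¹)⁻¹
  have hC0 : C ≠ 0 := by simp [C]
  have hCtop : C ≠ ⊤ := by
    have : ((2 : ℝ≥0∞) ^ (p - 1))⁻¹ < 1 :=
      ENNReal.inv_lt_one.2 (ENNReal.one_lt_rpow ENNReal.one_lt_two (by linarith))
    simp [C, ENNReal.mul_ne_top, tsub_eq_zero_iff_le, this.not_ge]
  refine ⟨C.toReal, ENNReal.toReal_pos hC0 hCtop, fun x φ hφ => ?_⟩
  have hφ' : maxOpE d φ = maximalFn fun k => ENNReal.ofReal (φ k) := by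
    simp_rw [maxOpE_eq_maximalFn, abs_of_nonneg (hφ _)]
  have hx : ∀ k, ENNReal.ofReal (|x k| ^ p) = ENNReal.ofReal |x k| ^ p := fun k =>
    (ENNReal.ofReal_rpow_of_nonneg (abs_nonneg _) (zero_lt_one.trans hp).le).symm
  simpa only [ENNReal.ofReal_toReal hCtop, hφ', hx, maxOpE_eq_maximalFn] using
    tsum_maximalFn_rpow_mul_le hp (fun k => ENNReal.ofReal |x k|) fun k => ENNReal.ofReal (φ k)
end
end

section
/- Let 1 < p < ∞. There exists K > 0 such that for all x : ℤ^d → ℝ and nonnegative φ : ℤ^d → ℝ, Σ_{k ∈ ℤ^d} (M̂x(k))^p φ(k) ≤ K Σ_{k ∈ ℤ^d} |x(k)|^p M̂φ(k), where M̂ is the even discrete maximal operator. -/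
open scoped BigOperators ENNReal

noncomputable section

/-!
The even maximal function is dominated, up to the factor `2 ^ (5 d)`, by the largest of `2 ^ d`
dyadic maximal functions, one for each choice of the grid `2 ^ m ℤ` or `gridShift m + 2 ^ m ℤ` in
every coordinate: as `gridShift m` is about a third of `2 ^ m`, one of the two grids has a cell of
side `2 ^ m ≤ 64 (N + 1)` containing any given interval of length `2 N + 3`. Conversely every
dyadic average is at most `2 ^ d` times an average over some `R_{k,N}`.

For a dyadic maximal function `M` truncated at scale `n`, the maximal dyadic cubes on which the
average of `f` exceeds `t` partition `{M f > t}`, which gives the weighted weak-type bound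
`t · ψ {M f > t} ≤ ∑ f · M ψ`. Since `M f ≤ M (f · 1{f > t}) + t`, the level set `{M f > 2 t}` is
controlled by the weak-type bound for `f · 1{f > t}`; summing over the levels `t = 2 ^ i` gives the
strong-type bound, and the truncation is removed by monotone convergence.
-/

namespace ENNReal

lemma tsum_iSup_of_monotone {ι : Type*} (F : ℕ → ι → ℝ≥0∞) (hF : ∀ i, Monotone (F · i)) :
    ∑' i, ⨆ n, F n i = ⨆ n, ∑' i, F n i := by
  refine le_antisymm ?_ (iSup_le fun n => ENNReal.tsum_le_tsum fun i => le_iSup (F · i) n)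
  rw [ENNReal.tsum_eq_iSup_sum]
  refine iSup_le fun s => ?_
  rw [ENNReal.finsetSum_iSup_of_monotone hF]
  exact iSup_mono fun n => ENNReal.sum_le_tsum s

lemma iSup_rpow {ι : Sort*} (f : ι → ℝ≥0∞) {p : ℝ} (hp : 0 < p) :
    (⨆ i, f i) ^ p = ⨆ i, f i ^ p :=
  (orderIsoRpow p hp).map_iSup f

lemma div_le_mul_div {S S' A B C : ℝ≥0∞} (hB₀ : B ≠ 0) (hB : B ≠ ⊤) (hS : S ≤ S')
    (hBA : B ≤ C * A) : S / A ≤ C * (S' / B) := by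
  refine ENNReal.div_le_of_le_mul ?_
  calc S ≤ S' * B / B := by rwa [ENNReal.mul_div_cancel_right hB₀ hB]
    _ ≤ S' * (C * A) / B := by gcongr
    _ = C * (S' / B) * A := by simp only [div_eq_mul_inv]; ring

end ENNReal

namespace DiscreteFeffermanStein

def twoPow (r : ℝ) : ℝ≥0∞ := 2 ^ r

lemma twoPow_ne_zero (r : ℝ) : twoPow r ≠ 0 := by
  simp [twoPow, ENNReal.rpow_eq_zero_iff]

lemma twoPow_ne_top (r : ℝ) : twoPow r ≠ ⊤ := by
  simp [twoPow, ENNReal.rpow_eq_top_iff]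

lemma twoPow_add (r s : ℝ) : twoPow (r + s) = twoPow r * twoPow s :=
  ENNReal.rpow_add r s two_ne_zero ENNReal.ofNat_ne_top

lemma twoPow_mul (r s : ℝ) : twoPow (r * s) = twoPow r ^ s :=
  ENNReal.rpow_mul 2 r s

lemma twoPow_zero : twoPow 0 = 1 := ENNReal.rpow_zero

lemma twoPow_one : twoPow 1 = 2 := ENNReal.rpow_one 2

lemma twoPow_strictMono : StrictMono twoPow := fun _ _ h =>
  ENNReal.rpow_lt_rpow_of_exponent_lt (by norm_num) ENNReal.ofNat_ne_top h

lemma twoPow_lt_twoPow {r s : ℝ} : twoPow r < twoPow s ↔ r < s := twoPow_strictMono.lt_iff_lt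

lemma twoPow_le_twoPow {r s : ℝ} : twoPow r ≤ twoPow s ↔ r ≤ s := twoPow_strictMono.le_iff_le

lemma exists_twoPow_le_lt {a : ℝ≥0∞} (h0 : a ≠ 0) (htop : a ≠ ⊤) :
    ∃ n : ℤ, twoPow n ≤ a ∧ a < twoPow (n + 1) := by
  obtain ⟨n, hn⟩ :=
    ENNReal.exists_mem_Ico_zpow h0 htop (by norm_num : (1 : ℝ≥0∞) < 2) ENNReal.ofNat_ne_top
  refine ⟨n, ?_, ?_⟩
  · rw [twoPow, ENNReal.rpow_intCast]
    exact hn.1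
  · rw [twoPow, ← Int.cast_one, ← Int.cast_add, ENNReal.rpow_intCast]
    exact hn.2

lemma tsum_ite_le_twoPow_mul (q : ℝ) (n : ℤ) :
    ∑' i : ℤ, (if i ≤ n then twoPow (i * q) else 0) = twoPow (n * q) * (1 - twoPow (-q))⁻¹ := by
  have hsupp : Function.support (fun i : ℤ => if i ≤ n then twoPow (i * q) else 0) ⊆
      Set.range (fun k : ℕ => n - k) := fun i hi =>
    ⟨(n - i).toNat, by simp only [Function.mem_support, ne_eq, ite_eq_right_iff] at hi; grind⟩
  have hinj : Function.Injective fun k : ℕ => n - k := fun a b h => by simpa using h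
  rw [← hinj.tsum_eq hsupp]
  have hterm (k : ℕ) : twoPow ((n - k : ℤ) * q) = twoPow (n * q) * twoPow (-q) ^ k := by
    rw [← ENNReal.rpow_natCast, ← twoPow_mul, ← twoPow_add]
    push_cast; ring_nf
  simp only [sub_le_self_iff, Nat.cast_nonneg, if_true, hterm, ENNReal.tsum_mul_left,
    ENNReal.tsum_geometric]

lemma rpow_le_twoPow_mul_tsum {q : ℝ} (hq : 0 < q) (b : ℝ≥0∞) :
    b ^ q ≤ twoPow (2 * q) * ∑' i : ℤ, (if twoPow i < b then twoPow (i * q) else 0) := by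
  rcases eq_or_ne b 0 with rfl | hb0
  · simp [ENNReal.zero_rpow_of_pos hq]
  rcases eq_or_ne b ⊤ with rfl | hbtop
  · have hsum : ∑' i : ℤ, (if twoPow i < ⊤ then twoPow (i * q) else 0) = ⊤ := by
      refine top_le_iff.mp ?_
      calc ⊤ = ∑' _ : ℕ, (1 : ℝ≥0∞) := (ENNReal.tsum_const_eq_top_of_ne_zero one_ne_zero).symm
        _ ≤ ∑' n : ℕ, (if twoPow (n : ℤ) < ⊤ then twoPow ((n : ℤ) * q) else 0) := by
          refine ENNReal.tsum_le_tsum fun n => ?_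
          rw [if_pos (lt_top_iff_ne_top.mpr (twoPow_ne_top _)), ← twoPow_zero]
          exact twoPow_le_twoPow.mpr (by positivity)
        _ ≤ _ := ENNReal.tsum_comp_le_tsum_of_injective Nat.cast_injective
          (fun i : ℤ => if twoPow i < ⊤ then twoPow (i * q) else 0)
    rw [hsum, ENNReal.mul_top (twoPow_ne_zero _)]
    exact le_top
  obtain ⟨n, hn, hn'⟩ := exists_twoPow_le_lt hb0 hbtop
  have hlevel : twoPow ((n - 1 : ℤ) : ℝ) < b :=
    (twoPow_lt_twoPow.mpr (by push_cast; linarith)).trans_le hn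
  calc b ^ q ≤ twoPow (n + 1) ^ q := ENNReal.rpow_le_rpow hn'.le hq.le
    _ = twoPow (2 * q) * twoPow ((n - 1 : ℤ) * q) := by
      rw [← twoPow_mul, ← twoPow_add]; push_cast; ring_nf
    _ ≤ _ := by
      gcongr
      calc twoPow ((n - 1 : ℤ) * q)
          = if twoPow ((n - 1 : ℤ) : ℝ) < b then twoPow ((n - 1 : ℤ) * q) else 0 := by
            rw [if_pos hlevel]
        _ ≤ _ := ENNReal.le_tsum (n - 1)

lemma exists_tsum_twoPow_le_rpow {q : ℝ} (hq : 0 < q) :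
    ∃ C : ℝ≥0∞, C ≠ ⊤ ∧ ∀ a : ℝ≥0∞,
      ∑' i : ℤ, (if twoPow (i - 1) < a then twoPow (i * q) else 0) ≤ C * a ^ q := by
  have hgeom : (1 - twoPow (-q))⁻¹ ≠ ⊤ := by
    rw [ne_eq, ENNReal.inv_eq_top, tsub_eq_zero_iff_le, not_le, ← twoPow_zero, twoPow_lt_twoPow]
    linarith
  refine ⟨twoPow (2 * q) * (1 - twoPow (-q))⁻¹,
    ENNReal.mul_ne_top (twoPow_ne_top _) hgeom, fun a => ?_⟩
  rcases eq_or_ne a 0 with rfl | ha0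
  · simp
  rcases eq_or_ne a ⊤ with rfl | hatop
  · rw [ENNReal.top_rpow_of_pos hq, ENNReal.mul_top]
    · exact le_top
    · exact mul_ne_zero (twoPow_ne_zero _)
        (ENNReal.inv_ne_zero.mpr (ENNReal.sub_ne_top ENNReal.one_ne_top))
  obtain ⟨n, hn, hn'⟩ := exists_twoPow_le_lt ha0 hatop
  have hrange (i : ℤ) (hi : twoPow (i - 1) < a) : i ≤ n + 1 := by
    have := twoPow_lt_twoPow.mp (hi.trans hn')
    have : i < n + 2 := by exact_mod_cast (show (i : ℝ) < n + 2 by linarith)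
    omega
  calc ∑' i : ℤ, (if twoPow (i - 1) < a then twoPow (i * q) else 0)
      ≤ ∑' i : ℤ, (if i ≤ n + 1 then twoPow (i * q) else 0) := by
        refine ENNReal.tsum_le_tsum fun i => ?_
        split_ifs with hi hi'
        · exact le_rfl
        · exact absurd (hrange i hi) hi'
        · exact zero_le
        · exact le_rfl
    _ = twoPow (2 * q) * twoPow ((n - 1 : ℤ) * q) * (1 - twoPow (-q))⁻¹ := by
      rw [tsum_ite_le_twoPow_mul q, ← twoPow_add]; push_cast; ring_nf
    _ ≤ twoPow (2 * q) * (1 - twoPow (-q))⁻¹ * a ^ q := by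
      rw [mul_right_comm]
      gcongr
      calc twoPow ((n - 1 : ℤ) * q) ≤ twoPow (n * q) :=
            twoPow_le_twoPow.mpr (by gcongr; linarith)
        _ = twoPow n ^ q := twoPow_mul _ _
        _ ≤ a ^ q := ENNReal.rpow_le_rpow hn hq.le

section Interpolation

variable {ι : Type*}

def HasWeightedWeakTypeOne (M : (ι → ℝ≥0∞) → ι → ℝ≥0∞) (w v : ι → ℝ≥0∞) : Prop :=
  ∀ f t, t * ∑' k, {k | t < M f k}.indicator w k ≤ ∑' j, f j * v j

lemma mul_tsum_indicator_two_mul_lt_le {M : (ι → ℝ≥0∞) → ι → ℝ≥0∞} {w v : ι → ℝ≥0∞}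
    (hadd : ∀ f g c, (∀ j, f j ≤ g j + c) → ∀ k, M f k ≤ M g k + c)
    (hweak : HasWeightedWeakTypeOne M w v) (f : ι → ℝ≥0∞) (c : ℝ≥0∞) :
    c * ∑' k, {k | 2 * c < M f k}.indicator w k ≤ ∑' j, {j | c < f j}.indicator f j * v j := by
  set g := {j | c < f j}.indicator f
  have hfg (j : ι) : f j ≤ g j + c := by
    by_cases hj : c < f j
    · simp [g, hj]
    · simpa [g, hj] using not_lt.mp hj
  have hsub : {k | 2 * c < M f k} ⊆ {k | c < M g k} := fun k hk => by
    by_contra hle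
    have := (hadd f g c hfg k).trans (add_le_add (not_lt.mp hle) le_rfl)
    have hk' : c + c < M f k := by simpa [two_mul] using hk
    exact (hk'.trans_le this).false
  calc c * ∑' k, {k | 2 * c < M f k}.indicator w k ≤ c * ∑' k, {k | c < M g k}.indicator w k := by
        gcongr with k
    _ ≤ _ := hweak g c

theorem exists_tsum_rpow_mul_le_of_hasWeightedWeakTypeOne {p : ℝ} (hp : 1 < p) :
    ∃ C : ℝ≥0∞, C ≠ ⊤ ∧ ∀ (M : (ι → ℝ≥0∞) → ι → ℝ≥0∞) (w v : ι → ℝ≥0∞),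
      (∀ f g c, (∀ j, f j ≤ g j + c) → ∀ k, M f k ≤ M g k + c) →
      HasWeightedWeakTypeOne M w v → ∀ f, ∑' k, M f k ^ p * w k ≤ C * ∑' j, f j ^ p * v j := by
  obtain ⟨C, hC, hlayer⟩ := exists_tsum_twoPow_le_rpow (q := p - 1) (by linarith)
  refine ⟨twoPow (2 * p) * 2 * C, by finiteness [twoPow_ne_top (2 * p)],
    fun M w v hadd hweak f => ?_⟩
  have hlevel (i : ℤ) : ∑' k, (if twoPow i < M f k then twoPow (i * p) else 0) * w k
      ≤ 2 * twoPow (i * (p - 1)) * ∑' j, {j | twoPow (i - 1) < f j}.indicator f j * v j := by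
    have hsplit : twoPow i = 2 * twoPow (i - 1) := by
      rw [← twoPow_one, ← twoPow_add]; ring_nf
    have hweight : twoPow (i * p) = 2 * twoPow (i * (p - 1)) * twoPow (i - 1) := by
      rw [← twoPow_one, ← twoPow_add, ← twoPow_add]; ring_nf
    calc ∑' k, (if twoPow i < M f k then twoPow (i * p) else 0) * w k
        = 2 * twoPow (i * (p - 1)) *
            (twoPow (i - 1) * ∑' k, {k | 2 * twoPow (i - 1) < M f k}.indicator w k) := by
          rw [← mul_assoc, ← hweight, ← ENNReal.tsum_mul_left, hsplit]
          refine tsum_congr fun k => ?_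
          by_cases hk : 2 * twoPow (i - 1) < M f k <;> simp [hk]
      _ ≤ _ := by gcongr; exact mul_tsum_indicator_two_mul_lt_le hadd hweak f _
  have hswap : ∑' i : ℤ, 2 * twoPow (i * (p - 1)) *
        ∑' j, {j | twoPow (i - 1) < f j}.indicator f j * v j
      = 2 * ∑' j, f j * v j *
          ∑' i : ℤ, (if twoPow (i - 1) < f j then twoPow (i * (p - 1)) else 0) := by
    simp_rw [mul_assoc, ENNReal.tsum_mul_left, ← ENNReal.tsum_mul_left]
    rw [ENNReal.tsum_comm]
    refine tsum_congr fun j => tsum_congr fun i => ?_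
    by_cases hj : twoPow (i - 1) < f j <;> simp [hj]; ring
  calc ∑' k, M f k ^ p * w k
      ≤ ∑' k, twoPow (2 * p) *
          ∑' i : ℤ, (if twoPow i < M f k then twoPow (i * p) else 0) * w k := by
        refine ENNReal.tsum_le_tsum fun k => ?_
        rw [ENNReal.tsum_mul_right, ← mul_assoc]
        gcongr
        exact rpow_le_twoPow_mul_tsum (by linarith) _
    _ = twoPow (2 * p) *
          ∑' i : ℤ, ∑' k, (if twoPow i < M f k then twoPow (i * p) else 0) * w k := by
        rw [ENNReal.tsum_mul_left, ENNReal.tsum_comm]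
    _ ≤ twoPow (2 * p) * (2 * ∑' j, f j * v j *
          ∑' i : ℤ, (if twoPow (i - 1) < f j then twoPow (i * (p - 1)) else 0)) := by
        rw [← hswap]
        gcongr with i
        exact hlevel i
    _ ≤ twoPow (2 * p) * (2 * ∑' j, f j * v j * (C * f j ^ (p - 1))) := by
        gcongr with j
        exact hlayer (f j)
    _ = twoPow (2 * p) * 2 * C * ∑' j, f j ^ p * v j := by
        have hpow (a : ℝ≥0∞) : a ^ p = a * a ^ (p - 1) := by
          conv_lhs => rw [show p = 1 + (p - 1) by ring]
          rw [ENNReal.rpow_add_of_nonneg _ _ zero_le_one (by linarith), ENNReal.rpow_one]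
        simp_rw [hpow, ← ENNReal.tsum_mul_left]
        exact tsum_congr fun j => by ring

end Interpolation

section Grid

/-- `∑_{j < m, j even} 2 ^ j`, about a third of the period `2 ^ m` (the one-third trick). -/
def gridShift : ℕ → ℤ
  | 0 => 0
  | m + 1 => gridShift m + if Even m then 2 ^ m else 0

lemma three_mul_gridShift (m : ℕ) :
    3 * gridShift m = if Even m then 2 ^ m - 1 else 2 ^ (m + 1) - 1 := by
  induction m with
  | zero => simp [gridShift]
  | succ m ih =>
    rw [gridShift]
    rcases Nat.even_or_odd m with hm | hm
    · have : ¬ Even (m + 1) := by simpa [Nat.even_add_one] using hm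
      simp only [hm, this, if_true, if_false] at ih ⊢
      rw [pow_succ, pow_succ]
      omega
    · have : ¬ Even m := Nat.not_even_iff_odd.mpr hm
      simp only [this, Nat.even_add_one.mpr this, if_true, if_false] at ih ⊢
      omega

lemma dvd_gridShift_sub {m n : ℕ} (h : m ≤ n) : (2 : ℤ) ^ m ∣ gridShift n - gridShift m := by
  induction n, h using Nat.le_induction with
  | base => simp
  | succ n hmn ih =>
    rw [gridShift, add_sub_right_comm]
    refine dvd_add ih ?_
    split_ifs
    · exact pow_dvd_pow 2 hmn
    · exact dvd_zero _

lemma gridShift_bounds {m : ℕ} (hm : 2 ≤ m) :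
    2 ^ m ≤ 4 * gridShift m ∧ 4 * gridShift m ≤ 3 * 2 ^ m := by
  have h3 := three_mul_gridShift m
  have h4 : (4 : ℤ) ≤ 2 ^ m := by
    calc (4 : ℤ) = 2 ^ 2 := by norm_num
      _ ≤ 2 ^ m := pow_le_pow_right₀ (by norm_num) hm
  split_ifs at h3
  · omega
  · rw [pow_succ] at h3
    omega

lemma exists_shift_far_from_grid {m : ℕ} {M : ℤ} (hM : 0 < M) (h16 : 16 * M ≤ 2 ^ m) (c : ℤ) :
    ∃ s : ℤ, (s = 0 ∨ s = gridShift m) ∧ M ≤ (c - s) % 2 ^ m ∧ (c - s) % 2 ^ m ≤ 2 ^ m - M := by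
  have hm : 2 ≤ m := by
    by_contra hc
    interval_cases m <;> omega
  obtain ⟨hb1, hb2⟩ := gridShift_bounds hm
  have hP : (0 : ℤ) < 2 ^ m := by positivity
  have hr0 := Int.emod_nonneg c hP.ne'
  have hr1 := Int.emod_lt_of_pos c hP
  by_cases hcase : M ≤ c % 2 ^ m ∧ c % 2 ^ m ≤ 2 ^ m - M
  · exact ⟨0, Or.inl rfl, by simpa using hcase⟩
  refine ⟨gridShift m, Or.inr rfl, ?_⟩
  have hmod : (c - gridShift m) % 2 ^ m = (c % 2 ^ m - gridShift m) % 2 ^ m :=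
    ((Int.mod_modEq c _).sub_right _).symm
  rcases le_or_gt (gridShift m) (c % 2 ^ m) with hge | hlt
  · rw [hmod, Int.emod_eq_of_lt (by omega) (by omega)]
    omega
  · rw [hmod, ← Int.add_mul_emod_self_right _ 1, one_mul, Int.emod_eq_of_lt (by omega) (by omega)]
    omega

/-- The left end point of the cell of the grid `s + 2 ^ m ℤ` containing `c`. -/
def dyadicStart (m : ℕ) (s c : ℤ) : ℤ := c - (c - s) % 2 ^ m

variable {m : ℕ} {s c : ℤ}

lemma dyadicStart_le : dyadicStart m s c ≤ c := by
  have := Int.emod_nonneg (c - s) (pow_pos (two_pos : (0 : ℤ) < 2) m).ne'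
  unfold dyadicStart; omega

lemma lt_dyadicStart_add : c < dyadicStart m s c + 2 ^ m := by
  have := Int.emod_lt_of_pos (c - s) (pow_pos (two_pos : (0 : ℤ) < 2) m)
  unfold dyadicStart; omega

lemma dvd_dyadicStart_sub : (2 : ℤ) ^ m ∣ dyadicStart m s c - s := by
  rw [dyadicStart, sub_right_comm]
  exact Int.dvd_self_sub_emod

lemma dvd_sub_dyadicStart {g : ℤ} (hg : (2 : ℤ) ^ m ∣ g - s) :
    (2 : ℤ) ^ m ∣ g - dyadicStart m s c := by
  simpa using dvd_sub hg (dvd_dyadicStart_sub (m := m) (s := s) (c := c))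

lemma le_dyadicStart_of_dvd {g : ℤ} (hg : (2 : ℤ) ^ m ∣ g - s) (hle : g ≤ c) :
    g ≤ dyadicStart m s c := by
  by_contra! hlt
  have := Int.le_of_dvd (by omega) (dvd_sub_dyadicStart (c := c) hg)
  have := lt_dyadicStart_add (m := m) (s := s) (c := c)
  omega

lemma dyadicStart_add_le_of_dvd {g : ℤ} (hg : (2 : ℤ) ^ m ∣ g - s) (hlt : c < g) :
    dyadicStart m s c + 2 ^ m ≤ g := by
  have := Int.le_of_dvd (by linarith [dyadicStart_le (m := m) (s := s) (c := c)])
    (dvd_sub_dyadicStart (c := c) hg)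
  omega

lemma eq_dyadicStart_of_dvd {g : ℤ} (hg : (2 : ℤ) ^ m ∣ g - s) (hle : g ≤ c)
    (hlt : c < g + 2 ^ m) : g = dyadicStart m s c := by
  refine le_antisymm (le_dyadicStart_of_dvd hg hle) ?_
  have hg' : (2 : ℤ) ^ m ∣ g + 2 ^ m - s := by
    rw [add_sub_right_comm]; exact dvd_add hg dvd_rfl
  have := dyadicStart_add_le_of_dvd hg' hlt
  omega

lemma dyadicStart_eq_of_mem {c' : ℤ} (h₁ : dyadicStart m s c ≤ c')
    (h₂ : c' < dyadicStart m s c + 2 ^ m) : dyadicStart m s c' = dyadicStart m s c :=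
  (eq_dyadicStart_of_dvd dvd_dyadicStart_sub h₁ h₂).symm

lemma dyadicStart_eq_of_le {m' : ℕ} (hm : m ≤ m') {s' c' : ℤ} (hs : (2 : ℤ) ^ m ∣ s' - s)
    (h : dyadicStart m s c' = dyadicStart m s c) : dyadicStart m' s' c' = dyadicStart m' s' c := by
  have hdvd : (2 : ℤ) ^ m ∣ (2 : ℤ) ^ m' := pow_dvd_pow 2 hm
  have hG : (2 : ℤ) ^ m ∣ dyadicStart m' s' c - s := by
    rw [← sub_add_sub_cancel _ s']
    exact dvd_add (hdvd.trans dvd_dyadicStart_sub) hs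
  have hG' : (2 : ℤ) ^ m ∣ dyadicStart m' s' c + 2 ^ m' - s := by
    rw [add_sub_right_comm]; exact dvd_add hG hdvd
  have h₁ := le_dyadicStart_of_dvd hG (dyadicStart_le (c := c))
  have h₂ := dyadicStart_add_le_of_dvd hG' (lt_dyadicStart_add (m := m') (s := s') (c := c))
  refine dyadicStart_eq_of_mem ?_ ?_
  · exact h₁.trans (h ▸ dyadicStart_le)
  · exact (h ▸ lt_dyadicStart_add (m := m) (s := s) (c := c')).trans_le h₂

end Grid

section Cubes

variable {d : ℕ}

def gridShiftVec (α : Fin d → Bool) (m : ℕ) (i : Fin d) : ℤ := if α i then gridShift m else 0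

lemma dvd_gridShiftVec_sub (α : Fin d → Bool) (i : Fin d) {m n : ℕ} (h : m ≤ n) :
    (2 : ℤ) ^ m ∣ gridShiftVec α n i - gridShiftVec α m i := by
  unfold gridShiftVec
  split_ifs
  · exact dvd_gridShift_sub h
  · simp

def dyadicCube (α : Fin d → Bool) (m : ℕ) (k : Fin d → ℤ) : Finset (Fin d → ℤ) :=
  Finset.Icc (fun i => dyadicStart m (gridShiftVec α m i) (k i))
    (fun i => dyadicStart m (gridShiftVec α m i) (k i) + 2 ^ m - 1)

variable {α : Fin d → Bool} {m : ℕ} {j k : Fin d → ℤ}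

lemma mem_dyadicCube_iff_forall : j ∈ dyadicCube α m k ↔ ∀ i,
    dyadicStart m (gridShiftVec α m i) (k i) ≤ j i ∧
      j i ≤ dyadicStart m (gridShiftVec α m i) (k i) + 2 ^ m - 1 := by
  simp only [dyadicCube, Finset.mem_Icc, Pi.le_def, forall_and]

lemma mem_dyadicCube : j ∈ dyadicCube α m k ↔ ∀ i,
    dyadicStart m (gridShiftVec α m i) (j i) = dyadicStart m (gridShiftVec α m i) (k i) := by
  rw [mem_dyadicCube_iff_forall]
  refine forall_congr' fun i => ⟨fun h => dyadicStart_eq_of_mem h.1 (by omega), fun h => ?_⟩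
  have := dyadicStart_le (m := m) (s := gridShiftVec α m i) (c := j i)
  have := lt_dyadicStart_add (m := m) (s := gridShiftVec α m i) (c := j i)
  omega

lemma self_mem_dyadicCube : k ∈ dyadicCube α m k := mem_dyadicCube.mpr fun _ => rfl

lemma dyadicCube_eq_of_le {m' : ℕ} (hm : m ≤ m') (h : j ∈ dyadicCube α m k) :
    dyadicCube α m' j = dyadicCube α m' k := by
  have hstart (i : Fin d) := dyadicStart_eq_of_le hm (dvd_gridShiftVec_sub α i hm)
    (mem_dyadicCube.mp h i)
  simp only [dyadicCube, hstart]

lemma dyadicCube_eq_of_mem (h : j ∈ dyadicCube α m k) : dyadicCube α m j = dyadicCube α m k :=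
  dyadicCube_eq_of_le le_rfl h

lemma card_dyadicCube : (dyadicCube α m k).card = 2 ^ (m * d) := by
  simp only [dyadicCube, Pi.card_Icc, Int.card_Icc, sub_add_cancel, add_sub_cancel_left]
  rw [Finset.prod_const, Finset.card_univ, Fintype.card_fin, pow_mul]
  norm_cast

lemma dyadicCube_subset_cubeR (hd : 0 < d) : dyadicCube α m k ⊆ cubeR d k (2 ^ m) := by
  intro j hj
  have hj := mem_dyadicCube_iff_forall.mp hj
  have hk := mem_dyadicCube_iff_forall.mp (self_mem_dyadicCube (α := α) (m := m) (k := k))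
  simp only [cubeR, Finset.mem_Ico, Pi.le_def, Pi.lt_def]
  push_cast
  refine ⟨fun i => ?_, fun i => ?_, ⟨0, hd⟩, ?_⟩ <;> grind

end Cubes

section Maximal

variable {d : ℕ}

def evenMax (d : ℕ) (f : (Fin d → ℤ) → ℝ≥0∞) (k : Fin d → ℤ) : ℝ≥0∞ :=
  ⨆ N : ℕ, (∑ j ∈ cubeR d k (N + 1), f j) / ((2 * (N + 1) : ℕ) : ℝ≥0∞) ^ d

def dyadicAvg (α : Fin d → Bool) (m : ℕ) (f : (Fin d → ℤ) → ℝ≥0∞) (k : Fin d → ℤ) : ℝ≥0∞ :=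
  (∑ j ∈ dyadicCube α m k, f j) / 2 ^ (m * d)

def dyadicMax (α : Fin d → Bool) (f : (Fin d → ℤ) → ℝ≥0∞) (k : Fin d → ℤ) : ℝ≥0∞ :=
  ⨆ m, dyadicAvg α m f k

lemma evenMax_zero_dim (f : (Fin 0 → ℤ) → ℝ≥0∞) (k : Fin 0 → ℤ) : evenMax 0 f k = 0 := by
  simp [evenMax, cubeR]

lemma emaxOpE_eq_evenMax (x : (Fin d → ℤ) → ℝ) :
    emaxOpE d x = evenMax d (fun k => ENNReal.ofReal |x k|) :=
  rfl

variable {α : Fin d → Bool} {m : ℕ} {f : (Fin d → ℤ) → ℝ≥0∞} {j k : Fin d → ℤ}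

lemma dyadicAvg_eq_of_mem (h : j ∈ dyadicCube α m k) : dyadicAvg α m f j = dyadicAvg α m f k := by
  rw [dyadicAvg, dyadicAvg, dyadicCube_eq_of_mem h]

lemma dyadicAvg_le_add {g : (Fin d → ℤ) → ℝ≥0∞} {c : ℝ≥0∞} (h : ∀ j, f j ≤ g j + c) :
    dyadicAvg α m f k ≤ dyadicAvg α m g k + c := by
  have hsum : ∑ j ∈ dyadicCube α m k, f j ≤ ∑ j ∈ dyadicCube α m k, g j + c * 2 ^ (m * d) := by
    calc ∑ j ∈ dyadicCube α m k, f j ≤ ∑ j ∈ dyadicCube α m k, (g j + c) :=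
          Finset.sum_le_sum fun j _ => h j
      _ = _ := by simp [Finset.sum_add_distrib, card_dyadicCube, mul_comm]
  calc dyadicAvg α m f k ≤ (∑ j ∈ dyadicCube α m k, g j + c * 2 ^ (m * d)) / 2 ^ (m * d) :=
        ENNReal.div_le_div_right hsum _
    _ = dyadicAvg α m g k + c := by
        rw [ENNReal.add_div, ENNReal.mul_div_cancel_right (by simp) (by simp), dyadicAvg]

lemma dyadicAvg_le_evenMax (hd : 0 < d) : dyadicAvg α m f k ≤ 2 ^ d * evenMax d f k := by
  have hN : 2 ^ m - 1 + 1 = 2 ^ m := Nat.sub_add_cancel Nat.one_le_two_pow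
  calc dyadicAvg α m f k
      ≤ 2 ^ d * ((∑ j ∈ cubeR d k (2 ^ m - 1 + 1), f j) /
          ((2 * (2 ^ m - 1 + 1) : ℕ) : ℝ≥0∞) ^ d) := by
        refine ENNReal.div_le_mul_div (by simp) (ENNReal.pow_ne_top (ENNReal.natCast_ne_top _)) ?_
          (le_of_eq ?_)
        · rw [hN]
          exact Finset.sum_le_sum_of_subset (dyadicCube_subset_cubeR hd)
        · rw [hN]; push_cast; ring
    _ ≤ 2 ^ d * evenMax d f k := by
        gcongr
        exact le_iSup (fun N : ℕ => (∑ j ∈ cubeR d k (N + 1), f j) /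
          ((2 * (N + 1) : ℕ) : ℝ≥0∞) ^ d) _

lemma dyadicMax_le_evenMax (hd : 0 < d) : dyadicMax α f k ≤ 2 ^ d * evenMax d f k :=
  iSup_le fun _ => dyadicAvg_le_evenMax hd

lemma exists_cubeR_subset_dyadicCube (k : Fin d → ℤ) (N : ℕ) :
    ∃ (α : Fin d → Bool) (m : ℕ), cubeR d k (N + 1) ⊆ dyadicCube α m k ∧
      2 ^ m ≤ 2 ^ 5 * (2 * (N + 1)) := by
  set m := Nat.log 2 (N + 2) + 5
  have hlog := Nat.pow_log_le_self 2 (x := N + 2) (by omega)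
  have hlog' := Nat.lt_pow_succ_log_self one_lt_two (N + 2)
  have h16 : 16 * ((N : ℤ) + 2) ≤ 2 ^ m := by
    rw [pow_succ] at hlog'
    simp only [m, pow_add]
    exact_mod_cast (by omega : 16 * (N + 2) ≤ 2 ^ Nat.log 2 (N + 2) * 2 ^ 5)
  choose s hs hs₁ hs₂ using fun i => exists_shift_far_from_grid (by omega) h16 (k i)
  refine ⟨fun i => decide (s i = gridShift m), m, fun j hj => ?_, by
    simp only [m, pow_add]; omega⟩
  have hshift (i : Fin d) : gridShiftVec (fun i => decide (s i = gridShift m)) m i = s i := by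
    rcases hs i with h | h <;> by_cases h' : s i = gridShift m <;> simp_all [gridShiftVec]
  have hjS : j ∈ cubeS d k (N + 1) := Finset.Ico_subset_Icc_self hj
  simp only [cubeS, Finset.mem_Icc, Pi.le_def] at hjS
  refine mem_dyadicCube_iff_forall.mpr fun i => ?_
  have := hjS.1 i
  have := hjS.2 i
  have := hs₁ i
  have := hs₂ i
  rw [hshift, dyadicStart]
  push_cast at *
  omega

lemma evenMax_le_iSup_dyadicMax :
    evenMax d f k ≤ 2 ^ (5 * d) * ⨆ α : Fin d → Bool, dyadicMax α f k := by
  refine iSup_le fun N => ?_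
  obtain ⟨α, m, hsub, hm⟩ := exists_cubeR_subset_dyadicCube k N
  calc (∑ j ∈ cubeR d k (N + 1), f j) / ((2 * (N + 1) : ℕ) : ℝ≥0∞) ^ d
      ≤ 2 ^ (5 * d) * dyadicAvg α m f k := by
        refine ENNReal.div_le_mul_div (by simp) (by simp) (Finset.sum_le_sum_of_subset hsub) ?_
        rw [pow_mul, pow_mul, ← mul_pow]
        gcongr
        exact_mod_cast hm
    _ ≤ 2 ^ (5 * d) * ⨆ α : Fin d → Bool, dyadicMax α f k := by
        gcongr
        exact (le_iSup (fun m => dyadicAvg α m f k) m).trans (le_iSup (fun α => dyadicMax α f k) α)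

end Maximal

section WeakType

variable {d : ℕ} {α : Fin d → Bool} {n : ℕ} {t : ℝ≥0∞} {f : (Fin d → ℤ) → ℝ≥0∞} {j k : Fin d → ℤ}

def truncDyadicMax (α : Fin d → Bool) (n : ℕ) (f : (Fin d → ℤ) → ℝ≥0∞) (k : Fin d → ℤ) :
    ℝ≥0∞ :=
  partialSups (fun m => dyadicAvg α m f k) n

lemma lt_truncDyadicMax_iff : t < truncDyadicMax α n f k ↔ ∃ m ≤ n, t < dyadicAvg α m f k := by
  simp only [truncDyadicMax, ← not_le, partialSups_le_iff, not_forall, exists_prop]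

lemma truncDyadicMax_le_add {g : (Fin d → ℤ) → ℝ≥0∞} {c : ℝ≥0∞} (h : ∀ j, f j ≤ g j + c) :
    truncDyadicMax α n f k ≤ truncDyadicMax α n g k + c :=
  partialSups_le_iff.mpr fun _ hm =>
    (dyadicAvg_le_add h).trans <|
      add_le_add (le_partialSups_of_le (fun m => dyadicAvg α m _ k) hm) le_rfl

lemma iSup_truncDyadicMax : ⨆ n, truncDyadicMax α n f k = dyadicMax α f k :=
  iSup_partialSups_eq _

def stoppingScale (α : Fin d → Bool) (n : ℕ) (t : ℝ≥0∞) (f : (Fin d → ℤ) → ℝ≥0∞)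
    (k : Fin d → ℤ) : ℕ :=
  Nat.findGreatest (fun m => t < dyadicAvg α m f k) n

lemma lt_dyadicAvg_stoppingScale (hk : t < truncDyadicMax α n f k) :
    t < dyadicAvg α (stoppingScale α n t f k) f k := by
  obtain ⟨m, hm, hlt⟩ := lt_truncDyadicMax_iff.mp hk
  exact Nat.findGreatest_spec (P := fun m => t < dyadicAvg α m f k) hm hlt

lemma stoppingScale_eq_of_mem (hk : t < truncDyadicMax α n f k)
    (hj : j ∈ dyadicCube α (stoppingScale α n t f k) k) :
    t < truncDyadicMax α n f j ∧ stoppingScale α n t f j = stoppingScale α n t f k := by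
  have hle : stoppingScale α n t f k ≤ n := Nat.findGreatest_le n
  have hj' : t < dyadicAvg α (stoppingScale α n t f k) f j := by
    rw [dyadicAvg_eq_of_mem hj]; exact lt_dyadicAvg_stoppingScale hk
  have hjE : t < truncDyadicMax α n f j := lt_truncDyadicMax_iff.mpr ⟨_, hle, hj'⟩
  have hge : stoppingScale α n t f k ≤ stoppingScale α n t f j := Nat.le_findGreatest hle hj'
  have hk' : t < dyadicAvg α (stoppingScale α n t f j) f k := by
    have hkj : k ∈ dyadicCube α (stoppingScale α n t f j) j :=
      dyadicCube_eq_of_le hge hj ▸ self_mem_dyadicCube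
    rw [dyadicAvg_eq_of_mem hkj]
    exact lt_dyadicAvg_stoppingScale hjE
  exact ⟨hjE, le_antisymm (Nat.le_findGreatest (Nat.findGreatest_le n) hk') hge⟩

theorem hasWeightedWeakTypeOne_truncDyadicMax (α : Fin d → Bool) (n : ℕ)
    (ψ : (Fin d → ℤ) → ℝ≥0∞) :
    HasWeightedWeakTypeOne (truncDyadicMax α n) ψ (dyadicMax α ψ) := by
  classical
  intro f t
  set E := {k | t < truncDyadicMax α n f k}
  set S := stoppingScale α n t f
  -- The stopping cubes partition `E`, so this relation is symmetric.
  set R : (Fin d → ℤ) → (Fin d → ℤ) → Prop := fun k j => k ∈ E ∧ j ∈ dyadicCube α (S k) k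
  have hR {k j} (h : R k j) : R j k ∧ S j = S k := by
    obtain ⟨hjE, hS⟩ := stoppingScale_eq_of_mem h.1 h.2
    refine ⟨⟨hjE, ?_⟩, hS⟩
    rw [show S j = S k from hS, dyadicCube_eq_of_mem h.2]
    exact self_mem_dyadicCube
  set G : (Fin d → ℤ) → (Fin d → ℤ) → ℝ≥0∞ := fun k j =>
    if R k j then f j * (ψ k * (2 ^ (S k * d))⁻¹) else 0
  have hrow (k) : t * E.indicator ψ k ≤ ∑' j, G k j := by
    by_cases hk : k ∈ E
    · rw [Set.indicator_of_mem hk,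
        tsum_eq_sum (s := dyadicCube α (S k) k) fun j hj => if_neg fun h => hj h.2]
      calc t * ψ k ≤ dyadicAvg α (S k) f k * ψ k := by
            gcongr; exact (lt_dyadicAvg_stoppingScale hk).le
        _ = ∑ j ∈ dyadicCube α (S k) k, G k j := by
          rw [dyadicAvg, div_eq_mul_inv, Finset.sum_mul, Finset.sum_mul]
          refine Finset.sum_congr rfl fun j hj => ?_
          simp only [G, if_pos (show R k j from ⟨hk, hj⟩)]
          ring
    · simp [hk]
  have hcol (j) : ∑' k, G k j ≤ f j * dyadicMax α ψ j := by
    by_cases hj : j ∈ E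
    · have hG (k) : G k j =
          if k ∈ dyadicCube α (S j) j then f j * (ψ k * (2 ^ (S j * d))⁻¹) else 0 := by
        by_cases h : R k j
        · simp only [G, if_pos h, (hR h).2, if_pos ((hR h).2 ▸ (hR h).1.2)]
        · simp only [G, if_neg h, if_neg fun hk => h (hR ⟨hj, hk⟩).1]
      rw [tsum_congr hG, tsum_eq_sum (s := dyadicCube α (S j) j) fun k hk => if_neg hk,
        Finset.sum_congr rfl fun k hk => if_pos hk, ← Finset.mul_sum, ← Finset.sum_mul,
        ← div_eq_mul_inv]
      gcongr
      exact le_iSup (fun m => dyadicAvg α m ψ j) (S j)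
    · have hG (k) : G k j = 0 := by simp only [G, if_neg fun h => hj (hR h).1.1]
      simp [hG]
  calc t * ∑' k, E.indicator ψ k = ∑' k, t * E.indicator ψ k := ENNReal.tsum_mul_left.symm
    _ ≤ ∑' k, ∑' j, G k j := ENNReal.tsum_le_tsum hrow
    _ = ∑' j, ∑' k, G k j := ENNReal.tsum_comm
    _ ≤ _ := ENNReal.tsum_le_tsum hcol

end WeakType

theorem exists_tsum_dyadicMax_rpow_mul_le {d : ℕ} {p : ℝ} (hp : 1 < p) :
    ∃ C : ℝ≥0∞, C ≠ ⊤ ∧ ∀ (α : Fin d → Bool) (f ψ : (Fin d → ℤ) → ℝ≥0∞),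
      ∑' k, dyadicMax α f k ^ p * ψ k ≤ C * ∑' j, f j ^ p * dyadicMax α ψ j := by
  obtain ⟨C, hC, hstrong⟩ :=
    exists_tsum_rpow_mul_le_of_hasWeightedWeakTypeOne (ι := Fin d → ℤ) hp
  refine ⟨C, hC, fun α f ψ => ?_⟩
  have hmono (k : Fin d → ℤ) : Monotone fun n => truncDyadicMax α n f k ^ p * ψ k :=
    fun _ _ h => mul_le_mul_left (ENNReal.rpow_le_rpow (partialSups_monotone _ h) (by linarith)) _
  calc ∑' k, dyadicMax α f k ^ p * ψ k = ⨆ n, ∑' k, truncDyadicMax α n f k ^ p * ψ k := by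
        simp_rw [← iSup_truncDyadicMax, ENNReal.iSup_rpow _ (by linarith : 0 < p), ENNReal.iSup_mul]
        exact ENNReal.tsum_iSup_of_monotone _ hmono
    _ ≤ _ := iSup_le fun n => hstrong (truncDyadicMax α n) ψ (dyadicMax α ψ)
        (fun _ _ _ h _ => truncDyadicMax_le_add h)
        (hasWeightedWeakTypeOne_truncDyadicMax α n ψ) f

theorem exists_tsum_evenMax_rpow_mul_le (d : ℕ) {p : ℝ} (hp : 1 < p) :
    ∃ C : ℝ≥0∞, C ≠ ⊤ ∧ ∀ f ψ : (Fin d → ℤ) → ℝ≥0∞,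
      ∑' k, evenMax d f k ^ p * ψ k ≤ C * ∑' j, f j ^ p * evenMax d ψ j := by
  have hp₀ : 0 < p := by linarith
  rcases Nat.eq_zero_or_pos d with rfl | hd
  · exact ⟨1, ENNReal.one_ne_top, fun f ψ => by simp [evenMax_zero_dim, hp₀]⟩
  obtain ⟨C, hC, hdyadic⟩ := exists_tsum_dyadicMax_rpow_mul_le (d := d) hp
  refine ⟨((2 : ℝ≥0∞) ^ (5 * d)) ^ p * 2 ^ d * C * 2 ^ d, by finiteness, fun f ψ => ?_⟩
  have hpoint (k : Fin d → ℤ) : evenMax d f k ^ p ≤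
      ((2 : ℝ≥0∞) ^ (5 * d)) ^ p * ∑ α : Fin d → Bool, dyadicMax α f k ^ p := by
    calc evenMax d f k ^ p ≤ ((2 : ℝ≥0∞) ^ (5 * d)) ^ p * (⨆ α, dyadicMax α f k) ^ p := by
          rw [← ENNReal.mul_rpow_of_nonneg _ _ hp₀.le]
          gcongr
          exact evenMax_le_iSup_dyadicMax
      _ ≤ _ := by
          rw [ENNReal.iSup_rpow _ hp₀]
          gcongr
          exact iSup_le fun α => Finset.single_le_sum (f := fun α => dyadicMax α f k ^ p)
            (fun _ _ => zero_le) (Finset.mem_univ α)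
  calc ∑' k, evenMax d f k ^ p * ψ k
      ≤ ∑' k, ((2 : ℝ≥0∞) ^ (5 * d)) ^ p * ∑ α : Fin d → Bool, dyadicMax α f k ^ p * ψ k := by
        refine ENNReal.tsum_le_tsum fun k => ?_
        rw [← Finset.sum_mul, ← mul_assoc]
        gcongr
        exact hpoint k
    _ = ((2 : ℝ≥0∞) ^ (5 * d)) ^ p * ∑ α : Fin d → Bool, ∑' k, dyadicMax α f k ^ p * ψ k := by
        rw [ENNReal.tsum_mul_left, Summable.tsum_finsetSum fun _ _ => ENNReal.summable]
    _ ≤ ((2 : ℝ≥0∞) ^ (5 * d)) ^ p * ∑ _α : Fin d → Bool,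
          C * ∑' j, f j ^ p * (2 ^ d * evenMax d ψ j) := by
        gcongr with α
        refine (hdyadic α f ψ).trans ?_
        gcongr
        exact dyadicMax_le_evenMax hd
    _ = _ := by
        simp_rw [Finset.sum_const, Finset.card_univ, Fintype.card_fun, Fintype.card_bool,
          Fintype.card_fin, nsmul_eq_mul, mul_left_comm _ ((2 : ℝ≥0∞) ^ d), ENNReal.tsum_mul_left]
        push_cast
        ring

end DiscreteFeffermanStein

open DiscreteFeffermanStein in
/-- discrete Fefferman–Stein inequality for the even maximal operator. -/
theorem discrete_fefferman_stein_even (d : ℕ) (p : ℝ) (hp : 1 < p) :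
    ∃ K : ℝ, 0 < K ∧ ∀ (x φ : (Fin d → ℤ) → ℝ), (∀ k, 0 ≤ φ k) →
      ∑' k : Fin d → ℤ, (emaxOpE d x k) ^ p * ENNReal.ofReal (φ k) ≤
        ENNReal.ofReal K * ∑' k : Fin d → ℤ, ENNReal.ofReal (|x k| ^ p) * emaxOpE d φ k := by
  obtain ⟨C, hC, hmax⟩ := exists_tsum_evenMax_rpow_mul_le d hp
  refine ⟨C.toReal + 1, by positivity, fun x φ _ => ?_⟩
  simp_rw [emaxOpE_eq_evenMax,
    ← ENNReal.ofReal_rpow_of_nonneg (abs_nonneg _) (by linarith : 0 ≤ p)]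
  calc ∑' k, evenMax d (fun j => ENNReal.ofReal |x j|) k ^ p * ENNReal.ofReal (φ k)
      ≤ ∑' k, evenMax d (fun j => ENNReal.ofReal |x j|) k ^ p * ENNReal.ofReal |φ k| := by
        gcongr with k
        exact le_abs_self (φ k)
    _ ≤ C * ∑' k, ENNReal.ofReal |x k| ^ p * evenMax d (fun j => ENNReal.ofReal |φ j|) k :=
        hmax _ _
    _ ≤ _ := by
        gcongr
        calc C = ENNReal.ofReal C.toReal := (ENNReal.ofReal_toReal hC).symm
          _ ≤ _ := ENNReal.ofReal_le_ofReal (by linarith)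
end
end
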